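/- For every state |ψ⟩ ∈ ℂ², (⟨−|⊗I)(I⊗T) Λ(Z) (|ψ⟩⊗|+⟩) = (1/√2) T H Z|ψ⟩, and for every unit vector |ψ⟩ each of the two measurement outcomes of this T gadget occurs with probability exactly 1/2: ‖(⟨±|⊗I)(I⊗T) Λ(Z) (|ψ⟩⊗|+⟩)‖² = 1/2. -/

import Mathlib

/-!
Contracting the first qubit of `(I⊗T) Λ(Z) (|ψ⟩⊗|+⟩)` with `⟨+|` leaves `(1/√2) T H |ψ⟩`, and
with `⟨−|` leaves `(1/√2) T H Z |ψ⟩`. Since `T`, `H` and `Z` are unitary, both outcomes have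
squared norm `‖ψ‖²/2`.
-/

noncomputable section

/-- The state `|+⟩ = (|0⟩+|1⟩)/√2` on one qubit. -/
def ketPlus : EuclideanSpace ℂ (Fin 2) := WithLp.toLp 2 (fun _ => (Real.sqrt 2 : ℂ)⁻¹)

/-- The Hadamard gate `H` acting on one qubit: `H|0⟩ = |+⟩`, `H|1⟩ = |−⟩`. -/
def Happ (v : EuclideanSpace ℂ (Fin 2)) : EuclideanSpace ℂ (Fin 2) :=
  WithLp.toLp 2 (fun i => (Real.sqrt 2 : ℂ)⁻¹ * (v 0 + (-1 : ℂ) ^ (i : ℕ) * v 1))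

/-- The Pauli gate `Z = diag(1,−1)` acting on one qubit. -/
def Zapp (v : EuclideanSpace ℂ (Fin 2)) : EuclideanSpace ℂ (Fin 2) :=
  WithLp.toLp 2 (fun i => (-1 : ℂ) ^ (i : ℕ) * v i)

/-- The gate `T = diag(1, e^{iπ/4})` acting on one qubit. -/
def Tapp (v : EuclideanSpace ℂ (Fin 2)) : EuclideanSpace ℂ (Fin 2) :=
  WithLp.toLp 2 (fun i => (if i = 1 then Complex.exp (Complex.I * Real.pi / 4) else 1) * v i)

/-- The gate `I ⊗ T` on two qubits (T acting on the second qubit). -/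
def TsndQubit (v : Fin 2 × Fin 2 → ℂ) : Fin 2 × Fin 2 → ℂ :=
  fun p => (if p.2 = 1 then Complex.exp (Complex.I * Real.pi / 4) else 1) * v p

/-- The tensor product `|ψ⟩ ⊗ |+⟩` on two qubits. -/
def tensorWithPlus (ψ : EuclideanSpace ℂ (Fin 2)) : Fin 2 × Fin 2 → ℂ :=
  fun p => ψ p.1 * ketPlus p.2

/-- The controlled-Z gate `Λ(Z) = |0⟩⟨0|⊗I + |1⟩⟨1|⊗Z` on two qubits. -/
def CZ (v : Fin 2 × Fin 2 → ℂ) : Fin 2 × Fin 2 → ℂ :=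
  fun p => (if p.1 = 1 ∧ p.2 = 1 then (-1 : ℂ) else 1) * v p

/-- The partial contraction `(⟨+|⊗I)` against the first qubit. -/
def braPlusFst (v : Fin 2 × Fin 2 → ℂ) : EuclideanSpace ℂ (Fin 2) :=
  WithLp.toLp 2 (fun j => (Real.sqrt 2 : ℂ)⁻¹ * (v (0, j) + v (1, j)))

/-- The partial contraction `(⟨−|⊗I)` against the first qubit. -/
def braMinusFst (v : Fin 2 × Fin 2 → ℂ) : EuclideanSpace ℂ (Fin 2) :=
  WithLp.toLp 2 (fun j => (Real.sqrt 2 : ℂ)⁻¹ * (v (0, j) - v (1, j)))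

theorem EuclideanSpace.norm_toLp_mul_of_norm_eq_one {𝕜 ι : Type*} [RCLike 𝕜] [Fintype ι]
    (d : ι → 𝕜) (hd : ∀ i, ‖d i‖ = 1) (v : EuclideanSpace 𝕜 ι) :
    ‖(WithLp.toLp 2 (fun i => d i * v i) : EuclideanSpace 𝕜 ι)‖ = ‖v‖ := by
  rw [← sq_eq_sq₀ (norm_nonneg _) (norm_nonneg _), EuclideanSpace.norm_sq_eq,
    EuclideanSpace.norm_sq_eq]
  simp [hd]

theorem EuclideanSpace.norm_sq_fin_two {𝕜 : Type*} [RCLike 𝕜] (v : EuclideanSpace 𝕜 (Fin 2)) :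
    ‖v‖ ^ 2 = ‖v 0‖ ^ 2 + ‖v 1‖ ^ 2 := by
  rw [EuclideanSpace.norm_sq_eq, Fin.sum_univ_two]

theorem norm_sq_inv_sqrt_two_smul {ι : Type*} [Fintype ι] (v : EuclideanSpace ℂ ι) :
    ‖(Real.sqrt 2 : ℂ)⁻¹ • v‖ ^ 2 = ‖v‖ ^ 2 / 2 := by
  rw [norm_smul, mul_pow, norm_inv, Complex.norm_real, Real.norm_eq_abs, inv_pow, sq_abs,
    Real.sq_sqrt zero_le_two, inv_mul_eq_div]

theorem norm_exp_I_mul_pi_div_four : ‖Complex.exp (Complex.I * Real.pi / 4)‖ = 1 := by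
  rw [Complex.norm_exp]
  simp

theorem norm_Zapp (v : EuclideanSpace ℂ (Fin 2)) : ‖Zapp v‖ = ‖v‖ :=
  EuclideanSpace.norm_toLp_mul_of_norm_eq_one _ (fun i => by simp) v

theorem norm_Tapp (v : EuclideanSpace ℂ (Fin 2)) : ‖Tapp v‖ = ‖v‖ :=
  EuclideanSpace.norm_toLp_mul_of_norm_eq_one _
    (fun i => by split_ifs <;> simp [norm_exp_I_mul_pi_div_four]) v

-- Unitarity of `H` is the parallelogram law for `v 0` and `v 1`.
theorem norm_Happ (v : EuclideanSpace ℂ (Fin 2)) : ‖Happ v‖ = ‖v‖ := by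
  have hrows : Happ v = (Real.sqrt 2 : ℂ)⁻¹ • (WithLp.toLp 2 ![v 0 + v 1, v 0 - v 1]) := by
    ext i
    fin_cases i <;> simp [Happ, sub_eq_add_neg]
  rw [← sq_eq_sq₀ (norm_nonneg _) (norm_nonneg _), hrows, norm_sq_inv_sqrt_two_smul,
    EuclideanSpace.norm_sq_fin_two, EuclideanSpace.norm_sq_fin_two]
  simp only [Fin.isValue, Matrix.cons_val_zero, Matrix.cons_val_one,
    Matrix.cons_val_fin_one]
  rw [parallelogram_law_with_norm ℂ]
  ring

theorem braPlusFst_TsndQubit_CZ_tensorWithPlus (ψ : EuclideanSpace ℂ (Fin 2)) :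
    braPlusFst (TsndQubit (CZ (tensorWithPlus ψ))) = (Real.sqrt 2 : ℂ)⁻¹ • Tapp (Happ ψ) := by
  ext j
  fin_cases j <;> simp [braPlusFst, TsndQubit, CZ, tensorWithPlus, ketPlus, Tapp, Happ] <;> ring

theorem braMinusFst_TsndQubit_CZ_tensorWithPlus (ψ : EuclideanSpace ℂ (Fin 2)) :
    braMinusFst (TsndQubit (CZ (tensorWithPlus ψ))) =
      (Real.sqrt 2 : ℂ)⁻¹ • Tapp (Happ (Zapp ψ)) := by
  ext j
  fin_cases j <;> simp [braMinusFst, TsndQubit, CZ, tensorWithPlus, ketPlus, Tapp, Happ, Zapp] <;>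
    ring

/-- T gadget, outcome 1: `(⟨−|⊗I)(I⊗T) Λ(Z) (|ψ⟩⊗|+⟩) = (1/√2) THZ|ψ⟩`;
moreover each of the two outcomes of the T gadget occurs with probability
exactly `1/2` on every unit input vector. -/
theorem T_gadget_outcome_one_and_probabilities :
    (∀ ψ : EuclideanSpace ℂ (Fin 2),
      braMinusFst (TsndQubit (CZ (tensorWithPlus ψ))) =
        (Real.sqrt 2 : ℂ)⁻¹ • Tapp (Happ (Zapp ψ))) ∧
    ∀ ψ : EuclideanSpace ℂ (Fin 2), ‖ψ‖ = 1 →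
      ‖braPlusFst (TsndQubit (CZ (tensorWithPlus ψ)))‖ ^ 2 = 1 / 2 ∧
        ‖braMinusFst (TsndQubit (CZ (tensorWithPlus ψ)))‖ ^ 2 = 1 / 2 := by
  refine ⟨braMinusFst_TsndQubit_CZ_tensorWithPlus, fun ψ hψ => ⟨?_, ?_⟩⟩
  · rw [braPlusFst_TsndQubit_CZ_tensorWithPlus, norm_sq_inv_sqrt_two_smul, norm_Tapp, norm_Happ,
      hψ, one_pow]
  · rw [braMinusFst_TsndQubit_CZ_tensorWithPlus, norm_sq_inv_sqrt_two_smul, norm_Tapp,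
      norm_Happ, norm_Zapp, hψ, one_pow]

end
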